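/- arXiv:1506.07659 — 8 statements merged into one kernel-verified Lean document; each statement's English description precedes it below -/
import Mathlib

section
/- Suppose (S_n) is multiplicatively ergodic on [0,γ₁) with maps A, ρ, and that ρ is differentiable at a point ν ∈ (0,γ₁) with ρ(ν) = 1/2 and ρ'(ν) ≠ 0, and ρ(γ) < 1/2 for γ > ν, ρ(γ) > 1/2 for γ < ν. Then lim_{γ→ν+} ((γ-ν)/γ) g_Y(γ,2) = -A(ν)/(2ν ρ'(ν)), where g_Y(γ,2) = Σ_n 2^n E[e^{-γ S_n}]. -/
open MeasureTheory Filter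

/-- Under multiplicative ergodicity on [0,γ₁), if ρ is differentiable
at ν ∈ (0,γ₁) with ρ(ν) = 1/2, ρ'(ν) ≠ 0, ρ < 1/2 to the right of ν and ρ > 1/2 to
the left, then lim_{γ→ν+} ((γ-ν)/γ) g_Y(γ,2) = -A(ν)/(2ν ρ'(ν)). -/
theorem stmt3 {Ω : Type*} [MeasurableSpace Ω] (ℙ : Measure Ω) [IsProbabilityMeasure ℙ]
    (Y : ℕ → Ω → ℝ) (hmeas : ∀ n, Measurable (Y n)) (hpos : ∀ n ω, 0 ≤ Y n ω)
    (S : ℕ → Ω → ℝ) (hS : ∀ n ω, S n ω = ∑ k ∈ Finset.range (n + 1), Y k ω)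
    (L : ℕ → ℝ → ℝ) (hL : ∀ n γ, L n γ = ∫ ω, Real.exp (-γ * S n ω) ∂ℙ)
    (g : ℝ → ℝ → ℝ) (hg : ∀ γ lam, g γ lam = ∑' n, lam ^ n * L n γ)
    (γ₁ : ℝ) (hγ₁ : 0 < γ₁) (A ρ : ℝ → ℝ)
    (hA : ContinuousOn A (Set.Ico 0 γ₁)) (hρ : ContinuousOn ρ (Set.Ico 0 γ₁))
    (hApos : ∀ γ ∈ Set.Ico (0:ℝ) γ₁, 0 < A γ)
    (hρpos : ∀ γ ∈ Set.Ico (0:ℝ) γ₁, 0 < ρ γ)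
    (hME : ∀ K ⊆ Set.Ioo (0:ℝ) γ₁, IsCompact K →
      ∃ M > (0:ℝ), ∃ θ ∈ Set.Ioo (0:ℝ) 1, ∀ γ ∈ K, ∀ n : ℕ, 1 ≤ n →
        |L n γ - A γ * ρ γ ^ n| ≤ M * (ρ γ * θ) ^ n)
    (ν : ℝ) (hν : ν ∈ Set.Ioo 0 γ₁) (ρ' : ℝ)
    (hderiv : HasDerivAt ρ ρ' ν) (hρν : ρ ν = 1 / 2) (hρ'ne : ρ' ≠ 0)
    (hright : ∀ γ, ν < γ → γ < γ₁ → ρ γ < 1 / 2)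
    (hleft : ∀ γ, 0 ≤ γ → γ < ν → 1 / 2 < ρ γ) :
    Filter.Tendsto (fun γ => ((γ - ν) / γ) * g γ 2)
      (nhdsWithin ν (Set.Ioi ν)) (nhds (-(A ν) / (2 * ν * ρ'))) := by
  obtain ⟨hν0, hνγ₁⟩ := hν
  set ν' : ℝ := (ν + γ₁) / 2 with hν'def
  have hνν' : ν < ν' := by rw [hν'def]; linarith
  have hν'γ₁ : ν' < γ₁ := by rw [hν'def]; linarith
  have hKsub : Set.Icc ν ν' ⊆ Set.Ioo (0:ℝ) γ₁ := fun x hx =>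
    ⟨lt_of_lt_of_le hν0 hx.1, lt_of_le_of_lt hx.2 hν'γ₁⟩
  obtain ⟨M, hM, θ, ⟨hθ0, hθ1⟩, hMEK⟩ := hME (Set.Icc ν ν') hKsub isCompact_Icc
  obtain ⟨C, hC⟩ := (isCompact_Icc (a := ν) (b := ν')).exists_bound_of_continuousOn
    (hA.mono (fun x hx => ⟨le_trans hν0.le hx.1, lt_of_le_of_lt hx.2 hν'γ₁⟩))
  have hC0 : 0 ≤ C := le_trans (norm_nonneg _) (hC ν ⟨le_refl ν, hνν'.le⟩)
  set bnd : ℕ → ℝ := fun n => M * θ ^ n + (if n = 0 then 1 + C else 0) with hbnddef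
  have hbnd_nonneg : ∀ n, 0 ≤ bnd n := by
    intro n
    apply add_nonneg (by positivity)
    split <;> linarith
  have hbnd_sum : Summable bnd := by
    apply Summable.add
    · exact (summable_geometric_of_lt_one hθ0.le hθ1).mul_left M
    · exact summable_of_ne_finset_zero (s := {0}) (fun n hn => by
        simp only [Finset.mem_singleton] at hn; simp [hn])
  set CE : ℝ := ∑' n, bnd n with hCEdef
  have hCE0 : 0 ≤ CE := tsum_nonneg hbnd_nonneg
  set E : ℝ → ℝ := fun γ => ∑' n, (2:ℝ) ^ n * (L n γ - A γ * ρ γ ^ n) with hEdef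
  have key : ∀ γ ∈ Set.Ioo ν ν',
      g γ 2 = A γ * (1 - 2 * ρ γ)⁻¹ + E γ ∧ |E γ| ≤ CE := by
    intro γ hγ
    have hγ0 : 0 < γ := lt_trans hν0 hγ.1
    have hγK : γ ∈ Set.Icc ν ν' := ⟨hγ.1.le, hγ.2.le⟩
    have hγIco : γ ∈ Set.Ico (0:ℝ) γ₁ := ⟨hγ0.le, lt_trans hγ.2 hν'γ₁⟩
    have hρ0 : 0 < ρ γ := hρpos γ hγIco
    have hρh : ρ γ < 1/2 := hright γ hγ.1 hγIco.2
    have h2ρ0 : (0:ℝ) ≤ 2 * ρ γ := by linarith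
    have h2ρ1 : 2 * ρ γ < 1 := by linarith
    have hL0 : |L 0 γ| ≤ 1 := by
      rw [hL]
      have hb : ∀ᵐ ω ∂ℙ, ‖Real.exp (-γ * S 0 ω)‖ ≤ 1 := by
        filter_upwards with ω
        rw [Real.norm_eq_abs, abs_of_pos (Real.exp_pos _)]
        apply Real.exp_le_one_iff.mpr
        have hS0 : 0 ≤ S 0 ω := by rw [hS]; simpa using hpos 0 ω
        nlinarith
      have := norm_integral_le_of_norm_le_const (μ := ℙ) hb
      simpa using this
    have hbound : ∀ n, |(2:ℝ) ^ n * (L n γ - A γ * ρ γ ^ n)| ≤ bnd n := by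
      intro n
      rcases Nat.eq_zero_or_pos n with rfl | hn
      · simp only [hbnddef, pow_zero, one_mul, mul_one, if_pos]
        have hCA : |A γ| ≤ C := by simpa [Real.norm_eq_abs] using hC γ hγK
        have h1 : |L 0 γ - A γ| ≤ |L 0 γ| + |A γ| := by
          simpa [Real.norm_eq_abs] using norm_sub_le (L 0 γ) (A γ)
        linarith
      · have hn' : n ≠ 0 := Nat.pos_iff_ne_zero.mp hn
        have hme := hMEK γ hγK n hn
        have heq : |(2:ℝ)^n * (L n γ - A γ * ρ γ ^ n)| = 2^n * |L n γ - A γ * ρ γ ^ n| := by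
          rw [abs_mul, abs_pow]; norm_num
        rw [heq]
        have hstep : (2:ℝ)^n * |L n γ - A γ * ρ γ ^ n| ≤ 2^n * (M * (ρ γ * θ)^n) :=
          mul_le_mul_of_nonneg_left hme (by positivity)
        have hstep2 : (2:ℝ)^n * (M * (ρ γ * θ)^n) = M * (2 * ρ γ * θ)^n := by
          rw [mul_pow, mul_pow]; ring
        have hstep3 : M * (2 * ρ γ * θ)^n ≤ M * θ^n := by
          apply mul_le_mul_of_nonneg_left _ hM.le
          apply pow_le_pow_left₀ (by positivity)
          nlinarith
        calc (2:ℝ)^n * |L n γ - A γ * ρ γ ^ n| ≤ 2^n * (M * (ρ γ * θ)^n) := hstep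
          _ = M * (2 * ρ γ * θ)^n := hstep2
          _ ≤ M * θ^n := hstep3
          _ ≤ bnd n := by simp [hbnddef, hn']
    have hsf : Summable (fun n : ℕ => (2:ℝ)^n * (L n γ - A γ * ρ γ ^ n)) :=
      Summable.of_norm_bounded hbnd_sum (fun n => by
        rw [Real.norm_eq_abs]; exact hbound n)
    have hgeo : Summable (fun n : ℕ => (2 * ρ γ) ^ n) :=
      summable_geometric_of_lt_one h2ρ0 h2ρ1
    have hsum1 : Summable (fun n : ℕ => A γ * (2 * ρ γ) ^ n) := hgeo.mul_left _
    constructor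
    · rw [hg]
      have heq : ∀ n : ℕ, (2:ℝ)^n * L n γ
          = A γ * (2 * ρ γ)^n + (2:ℝ)^n * (L n γ - A γ * ρ γ ^ n) := by
        intro n; rw [mul_pow]; ring
      rw [tsum_congr heq, Summable.tsum_add hsum1 hsf, tsum_mul_left,
        tsum_geometric_of_lt_one h2ρ0 h2ρ1]
    · have habs : Summable (fun n : ℕ => |(2:ℝ)^n * (L n γ - A γ * ρ γ ^ n)|) := hsf.abs
      calc |E γ| ≤ ∑' n, |(2:ℝ)^n * (L n γ - A γ * ρ γ ^ n)| := by
            simp only [hEdef]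
            simpa only [Real.norm_eq_abs] using
              norm_tsum_le_tsum_norm (f := fun n : ℕ => (2:ℝ)^n * (L n γ - A γ * ρ γ ^ n))
                (by simpa only [Real.norm_eq_abs] using habs)
        _ ≤ CE := Summable.tsum_le_tsum hbound habs hbnd_sum
  have hIooIoi : Set.Ioo ν ν' ∈ nhdsWithin ν (Set.Ioi ν) :=
    Ioo_mem_nhdsGT_of_mem ⟨le_refl ν, hνν'⟩
  have hAν : ContinuousAt A ν :=
    hA.continuousAt (mem_of_superset (Ioo_mem_nhds hν0 hνγ₁) Set.Ioo_subset_Ico_self)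
  have T1 : Tendsto (fun γ => A γ / γ) (nhdsWithin ν (Set.Ioi ν)) (nhds (A ν / ν)) :=
    ((hAν.div continuousAt_id hν0.ne')).tendsto.mono_left nhdsWithin_le_nhds
  -- derivative part
  have hq : HasDerivAt (fun γ => 1 - 2 * ρ γ) (-(2*ρ')) ν := by
    have h1 := (hasDerivAt_const ν (1:ℝ)).sub (hderiv.const_mul 2)
    have h2 : HasDerivAt (fun γ => 1 - 2 * ρ γ) (0 - 2 * ρ') ν := h1
    simpa using h2
  rw [hasDerivAt_iff_tendsto_slope] at hq
  have hq2 : Tendsto (slope (fun γ => 1 - 2*ρ γ) ν)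
      (nhdsWithin ν (Set.Ioi ν)) (nhds (-(2*ρ'))) :=
    hq.mono_left (nhdsWithin_mono ν (fun x hx => by
      simpa using (ne_of_gt (Set.mem_Ioi.mp hx))))
  have hne : -(2*ρ') ≠ 0 := neg_ne_zero.mpr (mul_ne_zero two_ne_zero hρ'ne)
  have hqinv := hq2.inv₀ hne
  have T2 : Tendsto (fun γ => (γ - ν) / (1 - 2 * ρ γ))
      (nhdsWithin ν (Set.Ioi ν)) (nhds ((-(2*ρ'))⁻¹)) := by
    apply hqinv.congr'
    filter_upwards [hIooIoi] with γ hγ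
    rw [slope_def_field]
    have hν0' : (1:ℝ) - 2 * ρ ν = 0 := by rw [hρν]; ring
    rw [hν0', sub_zero, inv_div]
  have T3 : Tendsto (fun γ => ((γ - ν)/γ) * E γ)
      (nhdsWithin ν (Set.Ioi ν)) (nhds 0) := by
    apply squeeze_zero_norm' (a := fun γ => |(γ - ν)/γ| * CE)
    · filter_upwards [hIooIoi] with γ hγ
      calc ‖((γ - ν)/γ) * E γ‖ = |(γ - ν)/γ| * |E γ| := by
            rw [Real.norm_eq_abs, abs_mul]
        _ ≤ |(γ - ν)/γ| * CE := mul_le_mul_of_nonneg_left (key γ hγ).2 (abs_nonneg _)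
    · have hc : ContinuousAt (fun γ : ℝ => |(γ - ν)/γ| * CE) ν := by
        apply ContinuousAt.mul _ continuousAt_const
        exact ((continuousAt_id.sub continuousAt_const).div continuousAt_id hν0.ne').abs
      have := hc.tendsto.mono_left (nhdsWithin_le_nhds (s := Set.Ioi ν))
      simpa using this
  have Tmain : Tendsto (fun γ => (A γ / γ) * ((γ - ν)/(1 - 2*ρ γ)) + ((γ - ν)/γ) * E γ)
      (nhdsWithin ν (Set.Ioi ν)) (nhds ((A ν / ν) * (-(2*ρ'))⁻¹ + 0)) :=
    (T1.mul T2).add T3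
  have hνne : ν ≠ 0 := hν0.ne'
  have hval : (A ν / ν) * (-(2*ρ'))⁻¹ + 0 = -(A ν)/(2*ν*ρ') := by
    rw [add_zero, ← div_eq_mul_inv, div_div,
      show ν * -(2*ρ') = -(2*ν*ρ') by ring, div_neg, neg_div]
  rw [hval] at Tmain
  apply Tmain.congr'
  filter_upwards [hIooIoi] with γ hγ
  have hγ0 : γ ≠ 0 := (lt_trans hν0 hγ.1).ne'
  have hρh : ρ γ < 1/2 := hright γ hγ.1 (lt_trans hγ.2 hν'γ₁)
  have h1 : 1 - 2*ρ γ ≠ 0 := by linarith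
  rw [(key γ hγ).1]
  field_simp
end

section
/- (Knudsen gas, uniqueness of eigenfunction.) Let P = α π + (1-α) U with α ∈ (0,1), πU = π, and P_γ f = P(e^{-γξ} f). Let r > 1-α, and suppose f, g ∈ L^a(π) with f > 0 π-a.e., P_γ f = r f, and P_γ g = r g. Then g = β f in L^a(π) where β = π(e^{-γξ} g)/π(e^{-γξ} f). -/
open MeasureTheory ProbabilityTheory Filter
open scoped ENNReal NNReal

/-- Knudsen gas, uniqueness of the eigenfunction: if `r > 1-α`,
`f, g ∈ L^a(π)`, `f > 0` π-a.e., and `P_γ f = r f`, `P_γ g = r g` π-a.e. where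
`P_γ h = α π(e^{-γξ} h) 1 + (1-α) U(e^{-γξ} h)`, then `g = β f` π-a.e. with
`β = π(e^{-γξ} g)/π(e^{-γξ} f)`. -/
theorem stmt9 {X : Type*} [MeasurableSpace X] (π : Measure X) [IsProbabilityMeasure π]
    (U : Kernel X X) [IsMarkovKernel U] (hinv : Kernel.Invariant U π)
    (α : ℝ) (hα : α ∈ Set.Ioo (0 : ℝ) 1)
    (ξ : X → ℝ) (hξmeas : Measurable ξ) (hξpos : ∀ x, 0 ≤ ξ x)
    (γ : ℝ) (hγ : 0 ≤ γ)
    (a : ENNReal) (ha1 : 1 ≤ a)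
    (r : ℝ) (hr : 1 - α < r)
    (f g : X → ℂ) (hfm : Measurable f) (hgm : Measurable g)
    (hfa : MemLp f a π) (hga : MemLp g a π)
    (hfpos : ∀ᵐ x ∂π, 0 < (f x).re ∧ (f x).im = 0)
    (hfeig : ∀ᵐ x ∂π,
      (α : ℂ) * (∫ y, Real.exp (-γ * ξ y) • f y ∂π)
        + ((1 - α : ℝ) : ℂ) * (∫ y, Real.exp (-γ * ξ y) • f y ∂(U x)) = (r : ℂ) * f x)
    (hgeig : ∀ᵐ x ∂π,
      (α : ℂ) * (∫ y, Real.exp (-γ * ξ y) • g y ∂π)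
        + ((1 - α : ℝ) : ℂ) * (∫ y, Real.exp (-γ * ξ y) • g y ∂(U x)) = (r : ℂ) * g x)
    (β : ℂ)
    (hβ : β = (∫ y, Real.exp (-γ * ξ y) • g y ∂π) / (∫ y, Real.exp (-γ * ξ y) • f y ∂π)) :
    ∀ᵐ x ∂π, g x = β * f x := by
  obtain ⟨hα0, hα1⟩ := hα
  set E : X → ℝ := fun y => Real.exp (-γ * ξ y) with hEdef
  have hEpos : ∀ y, 0 < E y := fun y => Real.exp_pos _
  have hEle : ∀ y, E y ≤ 1 := by
    intro y
    exact Real.exp_le_one_iff.mpr (by nlinarith [hξpos y])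
  have hEm : Measurable E := (hξmeas.const_mul (-γ)).exp
  -- L¹ integrability
  have hf1 : Integrable f π := memLp_one_iff_integrable.mp (hfa.mono_exponent ha1)
  have hg1 : Integrable g π := memLp_one_iff_integrable.mp (hga.mono_exponent ha1)
  -- multiplying by E keeps integrability
  have hEmul : ∀ (φ : X → ℂ) (ν : Measure X), Measurable φ → Integrable φ ν →
      Integrable (fun y => E y • φ y) ν := by
    intro φ ν hm hi
    refine hi.mono ((hEm.aestronglyMeasurable.smul hm.aestronglyMeasurable)) ?_
    refine Eventually.of_forall fun y => ?_
    rw [norm_smul]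
    have : ‖E y‖ ≤ 1 := by rw [Real.norm_eq_abs, abs_of_pos (hEpos y)]; exact hEle y
    calc ‖E y‖ * ‖φ y‖ ≤ 1 * ‖φ y‖ := by
          exact mul_le_mul_of_nonneg_right this (norm_nonneg _)
      _ = ‖φ y‖ := one_mul _
  have hEf1 : Integrable (fun y => E y • f y) π := hEmul f π hfm hf1
  have hEg1 : Integrable (fun y => E y • g y) π := hEmul g π hgm hg1
  set cf : ℂ := ∫ y, E y • f y ∂π with hcf
  set cg : ℂ := ∫ y, E y • g y ∂π with hcg
  -- cf is a positive real, hence nonzero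
  have hcfeq : cf = ((∫ y, E y * (f y).re ∂π : ℝ) : ℂ) := by
    have h0 : cf = ∫ y, ((E y * (f y).re : ℝ) : ℂ) ∂π := by
      rw [hcf]
      refine integral_congr_ae ?_
      filter_upwards [hfpos] with y hy
      apply Complex.ext <;>
        simp [Complex.real_smul, Complex.mul_re, Complex.mul_im, hy.2]
    rw [h0]
    exact integral_ofReal
  have hFm : Measurable fun y => E y * (f y).re := hEm.mul (Complex.measurable_re.comp hfm)
  have hFint : Integrable (fun y => E y * (f y).re) π := by
    refine hf1.norm.mono hFm.aestronglyMeasurable ?_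
    refine Eventually.of_forall fun y => ?_
    rw [Real.norm_eq_abs, abs_mul, abs_of_pos (hEpos y), norm_norm]
    calc E y * |(f y).re| ≤ 1 * |(f y).re| :=
          mul_le_mul_of_nonneg_right (hEle y) (abs_nonneg _)
      _ = |(f y).re| := one_mul _
      _ ≤ ‖f y‖ := Complex.abs_re_le_norm _
  have hIpos : 0 < ∫ y, E y * (f y).re ∂π := by
    have hnn : 0 ≤ᵐ[π] fun y => E y * (f y).re :=
      hfpos.mono fun y hy => le_of_lt (mul_pos (hEpos y) hy.1)
    refine (integral_pos_iff_support_of_nonneg_ae hnn hFint).mpr ?_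
    · have hnull : π (Function.support fun y => E y * (f y).re)ᶜ = 0 := by
        refine measure_mono_null ?_ (ae_iff.mp (hfpos.mono fun y hy => mul_pos (hEpos y) hy.1))
        intro x hx
        simp only [Set.mem_compl_iff, Function.mem_support, not_not] at hx
        simp [hx]
      have h2 : (1 : ℝ≥0∞) ≤ π (Function.support fun y => E y * (f y).re) := by
        have := measure_union_le (μ := π) (Function.support fun y => E y * (f y).re)
          (Function.support fun y => E y * (f y).re)ᶜ
        rwa [Set.union_compl_self, measure_univ, hnull, add_zero] at this
      exact lt_of_lt_of_le zero_lt_one h2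
  have hcfne : cf ≠ 0 := by
    rw [hcfeq]
    exact_mod_cast ne_of_gt hIpos
  have hβcf : β * cf = cg := by rw [hβ]; field_simp
  -- a.e. integrability w.r.t. U x, and invariance of lintegral of norms
  have hlin : ∀ (φ : X → ℂ), Measurable φ →
      ∫⁻ x, (∫⁻ y, ‖φ y‖₊ ∂(U x)) ∂π = ∫⁻ y, ‖φ y‖₊ ∂π := by
    intro φ hm
    rw [← Measure.lintegral_bind U.measurable.aemeasurable hm.nnnorm.coe_nnreal_ennreal.aemeasurable, hinv.def]
  have hkey : ∀ (φ : X → ℂ), Measurable φ → Integrable φ π →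
      ∀ᵐ x ∂π, Integrable φ (U x) := by
    intro φ hm hi
    have hfin : ∫⁻ x, (∫⁻ y, ‖φ y‖₊ ∂(U x)) ∂π ≠ ⊤ := by
      rw [hlin φ hm]; exact hi.2.ne
    filter_upwards [ae_lt_top (Measurable.lintegral_kernel hm.nnnorm.coe_nnreal_ennreal) hfin] with x hx
    exact ⟨hm.aestronglyMeasurable, hx⟩
  -- the difference h
  set h : X → ℂ := fun x => g x - β * f x with hhdef
  have hhm : Measurable h := hgm.sub (hfm.const_mul β)
  have hh1 : Integrable h π := hg1.sub (hf1.const_mul β)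
  -- eigen equation for h
  have heig : ∀ᵐ x ∂π, (r : ℂ) * h x = ((1 - α : ℝ) : ℂ) * ∫ y, E y • h y ∂(U x) := by
    filter_upwards [hfeig, hgeig, hkey f hfm hf1, hkey g hgm hg1] with x h1 h2 h3 h4
    have hEfx : Integrable (fun y => E y • f y) (U x) := hEmul f (U x) hfm h3
    have hEgx : Integrable (fun y => E y • g y) (U x) := hEmul g (U x) hgm h4
    have hsub : ∫ y, E y • h y ∂(U x)
        = (∫ y, E y • g y ∂(U x)) - β * ∫ y, E y • f y ∂(U x) := by
      rw [← integral_const_mul, ← integral_sub hEgx (hEfx.const_mul β)]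
      refine integral_congr_ae (Eventually.of_forall fun y => ?_)
      simp only [hhdef, Complex.real_smul]
      ring
    rw [hsub]
    have hc0 : cg - β * cf = 0 := by rw [hβcf]; ring
    simp only [hhdef, hEdef]
    linear_combination β * h1 - h2 + (α : ℂ) * hc0
  -- pass to norms
  set N : ℝ≥0∞ := ∫⁻ y, ‖h y‖₊ ∂π with hN
  have hNlt : N ≠ ⊤ := hh1.2.ne
  have hptwise : ∀ᵐ x ∂π,
      ENNReal.ofReal r * ‖h x‖₊ ≤ ENNReal.ofReal (1 - α) * ∫⁻ y, ‖h y‖₊ ∂(U x) := by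
    filter_upwards [heig] with x hx
    have e1 : ENNReal.ofReal r * ‖h x‖₊ = (‖(r : ℂ) * h x‖₊ : ℝ≥0∞) := by
      rw [nnnorm_mul, ENNReal.coe_mul, Complex.nnnorm_real,
        (id (Real.enorm_eq_ofReal (by linarith : (0:ℝ) ≤ r)) : (‖r‖₊ : ℝ≥0∞) = ENNReal.ofReal r)]
    rw [e1, hx, nnnorm_mul, ENNReal.coe_mul, Complex.nnnorm_real,
      (id (Real.enorm_eq_ofReal (by linarith : (0:ℝ) ≤ 1 - α)) : (‖1 - α‖₊ : ℝ≥0∞) = ENNReal.ofReal (1 - α))]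
    refine mul_le_mul_right ?_ _
    calc (‖∫ y, E y • h y ∂(U x)‖₊ : ℝ≥0∞) ≤ ∫⁻ y, ‖E y • h y‖₊ ∂(U x) :=
          enorm_integral_le_lintegral_enorm _
      _ ≤ ∫⁻ y, ‖h y‖₊ ∂(U x) := by
          refine lintegral_mono fun y => ?_
          rw [nnnorm_smul]
          have : (‖E y‖₊ : ℝ≥0∞) ≤ 1 := by
            rw [(id (Real.enorm_eq_ofReal (le_of_lt (hEpos y))) : (‖E y‖₊ : ℝ≥0∞) = ENNReal.ofReal (E y))]
            exact ENNReal.ofReal_le_one.mpr (hEle y)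
          calc ((‖E y‖₊ * ‖h y‖₊ : NNReal) : ℝ≥0∞) = (‖E y‖₊ : ℝ≥0∞) * ‖h y‖₊ :=
                ENNReal.coe_mul _ _
            _ ≤ 1 * ‖h y‖₊ := mul_le_mul_left this _
            _ = _ := one_mul _
  have hmain : ENNReal.ofReal r * N ≤ ENNReal.ofReal (1 - α) * N := by
    calc ENNReal.ofReal r * N = ∫⁻ x, ENNReal.ofReal r * ‖h x‖₊ ∂π := by
          rw [lintegral_const_mul _ hhm.nnnorm.coe_nnreal_ennreal]
      _ ≤ ∫⁻ x, ENNReal.ofReal (1 - α) * ∫⁻ y, ‖h y‖₊ ∂(U x) ∂π := lintegral_mono_ae hptwise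
      _ = ENNReal.ofReal (1 - α) * ∫⁻ x, ∫⁻ y, ‖h y‖₊ ∂(U x) ∂π :=
          lintegral_const_mul _ (Measurable.lintegral_kernel hhm.nnnorm.coe_nnreal_ennreal)
      _ = ENNReal.ofReal (1 - α) * N := by rw [hlin h hhm]
  have hN0 : N = 0 := by
    by_contra hne
    have hle := (ENNReal.mul_le_mul_iff_right hne hNlt).mp
      (by rwa [mul_comm (ENNReal.ofReal r), mul_comm (ENNReal.ofReal (1-α))] at hmain :
        N * ENNReal.ofReal r ≤ N * ENNReal.ofReal (1 - α))
    have := (ENNReal.ofReal_le_ofReal_iff (by linarith)).mp hle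
    linarith
  have : ∀ᵐ x ∂π, (‖h x‖₊ : ℝ≥0∞) = 0 := (lintegral_eq_zero_iff hhm.nnnorm.coe_nnreal_ennreal).mp hN0
  filter_upwards [this] with x hx
  have : h x = 0 := by simpa using hx
  simpa [hhdef, sub_eq_zero] using this
end

section
/- (Knudsen gas, aperiodicity.) Let P = α π + (1-α) U with α ∈ (0,1) and πU = π. If k ∈ L^1(π) with |k| = 1 π-a.e. and Pk = λk in L^1(π) for some λ ∈ ℂ with |λ| = 1, then λ = 1 and k is π-a.e. constant. -/
open MeasureTheory ProbabilityTheory Filter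

/-- Knudsen gas, aperiodicity: let `P f = α π(f) 1 + (1-α) U f` with
`α ∈ (0,1)` and `πU = π`. If `k ∈ L^1(π)`, `|k| = 1` π-a.e. and `P k = λ k` π-a.e.
for some `λ` of modulus 1, then `λ = 1` and `k` is π-a.e. constant. -/
theorem stmt10 {X : Type*} [MeasurableSpace X] (π : Measure X) [IsProbabilityMeasure π]
    (U : Kernel X X) [IsMarkovKernel U] (hinv : Kernel.Invariant U π)
    (α : ℝ) (hα : α ∈ Set.Ioo (0 : ℝ) 1)
    (k : X → ℂ) (hkm : Measurable k) (hk1 : Integrable k π)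
    (hkmod : ∀ᵐ x ∂π, ‖k x‖ = 1)
    (lam : ℂ) (hlam : ‖lam‖ = 1)
    (heig : ∀ᵐ x ∂π,
      (α : ℂ) * (∫ y, k y ∂π) + ((1 - α : ℝ) : ℂ) * (∫ y, k y ∂(U x)) = lam * k x) :
    lam = 1 ∧ ∃ c : ℂ, ∀ᵐ x ∂π, k x = c := by
  obtain ⟨hα0, hα1⟩ := hα
  set m : ℂ := ∫ y, k y ∂π with hm
  set g : X → ℂ := fun x => ∫ y, k y ∂(U x) with hg
  have hsnd : Measure.snd (π ⊗ₘ U) = π := by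
    have h : Measure.snd (π ⊗ₘ U) = π.bind U := by
      ext s hs
      rw [Measure.snd_apply hs, Measure.compProd_apply (measurable_snd hs),
        Measure.bind_apply hs (Kernel.measurable U).aemeasurable]
      rfl
    rw [h, hinv.def]
  have hks : Integrable (fun z : X × X => k z.2) (π ⊗ₘ U) := by
    have h : Integrable k (Measure.snd (π ⊗ₘ U)) := by rw [hsnd]; exact hk1
    rw [Measure.snd, integrable_map_measure hkm.aestronglyMeasurable
      measurable_snd.aemeasurable] at h
    exact h
  have hgint : ∫ x, g x ∂π = m := by
    have h1 := Measure.integral_compProd (κ := U) hks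
    have h2 : ∫ z : X × X, k z.2 ∂(π ⊗ₘ U) = ∫ y, k y ∂(Measure.snd (π ⊗ₘ U)) := by
      rw [Measure.snd, integral_map measurable_snd.aemeasurable hkm.aestronglyMeasurable]
    rw [hsnd] at h2
    rw [hm, ← h2, h1]
  have hUmod : ∀ᵐ x ∂π, ∀ᵐ y ∂(U x), ‖k y‖ = 1 := by
    set S : Set X := {y | ¬ ‖k y‖ = 1} with hS
    have hSm : MeasurableSet S :=
      (measurableSet_eq_fun (continuous_norm.measurable.comp hkm)
        measurable_const).compl
    have hπS : π S = 0 := hkmod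
    have hbind : ∫⁻ x, U x S ∂π = 0 := by
      calc ∫⁻ x, U x S ∂π = (π.bind U) S := (Measure.bind_apply hSm (Kernel.measurable U).aemeasurable).symm
        _ = π S := by rw [hinv.def]
        _ = 0 := hπS
    have h := (lintegral_eq_zero_iff (Kernel.measurable_coe U hSm)).mp hbind
    filter_upwards [h] with x hx
    exact hx
  have hgbound : ∀ᵐ x ∂π, ‖g x‖ ≤ 1 := by
    filter_upwards [hUmod] with x hx
    have h1 : ∫ y, ‖k y‖ ∂(U x) = 1 := by
      have h : ∫ y, ‖k y‖ ∂(U x) = ∫ (_ : X), (1 : ℝ) ∂(U x) := by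
        apply integral_congr_ae
        filter_upwards [hx] with y hy
        simpa using hy
      rw [h]; simp
    calc ‖g x‖ ≤ ∫ y, ‖k y‖ ∂(U x) := norm_integral_le_integral_norm _
      _ = 1 := h1
  have hnormπ : ∫ y, ‖k y‖ ∂π = 1 := by
    have h : ∫ y, ‖k y‖ ∂π = ∫ (_ : X), (1 : ℝ) ∂π := by
      apply integral_congr_ae
      filter_upwards [hkmod] with y hy
      simpa using hy
    rw [h]; simp
  have hmle : ‖m‖ ≤ 1 := by
    calc ‖m‖ ≤ ∫ y, ‖k y‖ ∂π := norm_integral_le_integral_norm _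
      _ = 1 := hnormπ
  have hmge : (1 : ℝ) ≤ ‖m‖ := by
    have hae : ∀ᵐ x ∂π, (1 : ℝ) ≤ α * ‖m‖ + (1 - α) := by
      filter_upwards [heig, hkmod, hgbound] with x h1 h2 h3
      have hlk : ‖lam * k x‖ = 1 := by
        simp [map_mul, hlam, h2]
      calc (1 : ℝ) = ‖(α : ℂ) * m + ((1 - α : ℝ) : ℂ) * g x‖ := by rw [h1, hlk]
        _ ≤ ‖(α : ℂ) * m‖ + ‖((1 - α : ℝ) : ℂ) * g x‖ := norm_add_le _ _
        _ = α * ‖m‖ + (1 - α) * ‖g x‖ := by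
            rw [norm_mul, norm_mul, Complex.norm_real, Complex.norm_real,
              Real.norm_eq_abs, Real.norm_eq_abs, abs_of_pos hα0,
              abs_of_pos (show (0:ℝ) < 1 - α by linarith)]
        _ ≤ α * ‖m‖ + (1 - α) * 1 := by nlinarith
        _ = α * ‖m‖ + (1 - α) := by ring
    obtain ⟨x, hx⟩ := hae.exists
    nlinarith
  have hmnorm : ‖m‖ = 1 := le_antisymm hmle hmge
  have hmne : m ≠ 0 := by
    intro h; rw [h] at hmnorm; simp at hmnorm
  have hne : ((1 - α : ℝ) : ℂ) ≠ 0 := by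
    simp only [ne_eq, Complex.ofReal_eq_zero]; intro h; linarith
  have heqg : g =ᵐ[π] fun x => (((1 - α : ℝ) : ℂ))⁻¹ * (lam * k x - (α : ℂ) * m) := by
    filter_upwards [heig] with x h1
    have h2 : ((1 - α : ℝ) : ℂ) * g x = lam * k x - (α : ℂ) * m := by
      linear_combination h1
    rw [← h2, inv_mul_cancel_left₀ hne]
  have hgI : Integrable g π :=
    (((hk1.const_mul lam).sub (integrable_const _)).const_mul _).congr heqg.symm
  have hint : (α : ℂ) * m + ((1 - α : ℝ) : ℂ) * m = lam * m := by
    have h1 : ∫ x, ((α : ℂ) * m + ((1 - α : ℝ) : ℂ) * g x) ∂π = ∫ x, lam * k x ∂π :=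
      integral_congr_ae heig
    rw [integral_add (integrable_const _) (hgI.const_mul _), integral_const,
      integral_const_mul, integral_const_mul, hgint, ← hm] at h1
    simpa using h1
  have hlam1 : lam = 1 := by
    have h : lam * m = 1 * m := by
      rw [one_mul, ← hint]; push_cast; ring
    exact mul_right_cancel₀ hmne h
  refine ⟨hlam1, m, ?_⟩
  have hnsq : Complex.normSq m = 1 := by
    have h : ‖m‖ = 1 := hmnorm
    rw [Complex.normSq_eq_norm_sq, h]; norm_num
  have hφI : Integrable (fun x => ((starRingEnd ℂ) m * k x).re) π :=
    (hk1.const_mul ((starRingEnd ℂ) m)).re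
  have hφint : ∫ x, ((starRingEnd ℂ) m * k x).re ∂π = 1 := by
    have h1 : ∫ x, (starRingEnd ℂ) m * k x ∂π = (starRingEnd ℂ) m * m := by
      rw [integral_const_mul, ← hm]
    have h2 := integral_re (μ := π) (f := fun x => (starRingEnd ℂ) m * k x)
      (hk1.const_mul _)
    simp only [RCLike.re_to_complex] at h2
    rw [h1] at h2
    rw [h2]
    have : (starRingEnd ℂ) m * m = (Complex.normSq m : ℂ) := by
      rw [mul_comm, Complex.mul_conj]
    rw [this, hnsq]
    norm_num
  have hφle : ∀ᵐ x ∂π, ((starRingEnd ℂ) m * k x).re ≤ 1 := by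
    filter_upwards [hkmod] with x hx
    calc ((starRingEnd ℂ) m * k x).re ≤ ‖(starRingEnd ℂ) m * k x‖ :=
          Complex.re_le_norm _
      _ = ‖m‖ * ‖k x‖ := by rw [norm_mul, Complex.norm_conj]
      _ = 1 := by
          rw [hx, mul_one]
          exact hmnorm
  have h0 : (fun x => 1 - ((starRingEnd ℂ) m * k x).re) =ᵐ[π] 0 := by
    have hnn : 0 ≤ᵐ[π] fun x => 1 - ((starRingEnd ℂ) m * k x).re := by
      filter_upwards [hφle] with x h; simpa using h
    have hI : Integrable (fun x => 1 - ((starRingEnd ℂ) m * k x).re) π :=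
      (integrable_const 1).sub hφI
    have hz : ∫ x, (1 - ((starRingEnd ℂ) m * k x).re) ∂π = 0 := by
      rw [integral_sub (integrable_const 1) hφI, hφint]; simp
    exact (integral_eq_zero_iff_of_nonneg_ae hnn hI).mp hz
  filter_upwards [h0, hkmod] with x h1 h2
  have hre : ((starRingEnd ℂ) m * k x).re = 1 := by
    have h : 1 - ((starRingEnd ℂ) m * k x).re = 0 := h1
    linarith
  have habs : ‖(starRingEnd ℂ) m * k x‖ = 1 := by
    rw [norm_mul, Complex.norm_conj, h2, mul_one]
    exact hmnorm
  have hnsq2 : Complex.normSq ((starRingEnd ℂ) m * k x) = 1 := by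
    rw [Complex.normSq_eq_norm_sq, habs]; norm_num
  have him : ((starRingEnd ℂ) m * k x).im = 0 := by
    have h := Complex.normSq_apply ((starRingEnd ℂ) m * k x)
    nlinarith
  have hz1 : (starRingEnd ℂ) m * k x = 1 := by
    apply Complex.ext <;> simp [hre, him]
  calc k x = (m * (starRingEnd ℂ) m) * k x := by
        rw [Complex.mul_conj, hnsq]; simp
    _ = m * ((starRingEnd ℂ) m * k x) := by ring
    _ = m := by rw [hz1, mul_one]
end

section
/- (Knudsen gas, eigenvalue equation.) Let P_γ f = α π(f h_γ) 1_X + (1-α) U(f h_γ) where h_γ = e^{-γξ}, and set Ũ_γ(g) = h_γ · U(g). Let λ ∈ ℂ be an eigenvalue of P_γ on L^a(π) with |λ| > (1-α) r(Ũ_γ), where r(Ũ_γ) is the spectral radius of Ũ_γ on L^a(π). Then λ = α Σ_{n≥0} ((1-α)/λ)^n π(Ũ_γ^n h_γ). -/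
open Filter

lemma hasSum_inv_one_sub_smul {A : Type*} [NormedRing A] [NormedAlgebra ℂ A]
    [CompleteSpace A] (a : A) {z : ℂ} (hz : (‖z‖₊ : ENNReal) < (spectralRadius ℂ a)⁻¹) :
    HasSum (fun n : ℕ => z ^ n • a ^ n) (Ring.inverse (1 - z • a)) := by
  obtain ⟨r, hr1, hr2⟩ := ENNReal.lt_iff_exists_nnreal_btwn.mp hz
  have r_pos : (0:ℝ) < r := by
    have : (0:ENNReal) < r := lt_of_le_of_lt zero_le hr1
    exact_mod_cast this
  have H₁ := (spectrum.differentiableOn_inverse_one_sub_smul hr2).hasFPowerSeriesOnBall r_pos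
  have H₂ := (spectrum.hasFPowerSeriesOnBall_inverse_one_sub_smul ℂ a).exchange_radius H₁
  have h3 := H₂.hasSum (y := z) (by rw [EMetric.mem_ball, edist_zero_right]; exact hr1)
  simpa [ContinuousMultilinearMap.mkPiRing_apply] using h3

set_option maxHeartbeats 1000000 in
/-- STATEMENT 11 (Knudsen gas, eigenvalue equation), abstractly on `E = L^a(π)`:
`T` is multiplication by `h_γ = e^{-γξ}`, `one` the constant function 1 (so `T one = h_γ`),
`πst` integration against `π`, `Ũ_γ = T ∘ U`, and
`P_γ f = α π(T f) • 1 + (1-α) U(T f)`. If `λ` is an eigenvalue of `P_γ` with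
`|λ| > (1-α) r(Ũ_γ)`, then `λ = α Σ_{n≥0} ((1-α)/λ)^n π(Ũ_γ^n h_γ)`. -/
theorem stmt11 {E : Type*} [NormedAddCommGroup E] [NormedSpace ℂ E] [CompleteSpace E]
    (α : ℝ) (hα : α ∈ Set.Ioo (0 : ℝ) 1)
    (T U : E →L[ℂ] E) (one : E) (πst : E →L[ℂ] ℂ)
    (hπone : πst one = 1)
    (Pγ : E → E)
    (hP : ∀ f : E, Pγ f = ((α : ℂ) * πst (T f)) • one + ((1 - α : ℝ) : ℂ) • U (T f))
    (lam : ℂ) (f : E) (hf : f ≠ 0) (heig : Pγ f = lam • f)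
    (hlam : ENNReal.ofReal (1 - α) * spectralRadius ℂ (T.comp U) < (‖lam‖₊ : ENNReal)) :
    lam = (α : ℂ) * ∑' n : ℕ, (((1 - α : ℝ) : ℂ) / lam) ^ n
      * πst (((T.comp U) ^ n) (T one)) := by
  obtain ⟨hα0, hα1⟩ := hα
  have h1α : (0:ℝ) < 1 - α := by linarith
  have h1αc : ((1-α:ℝ):ℂ) ≠ 0 := by
    simp only [ne_eq, Complex.ofReal_eq_zero]; linarith
  have h1αc' : (1:ℂ) - (α:ℂ) ≠ 0 := by push_cast at h1αc ⊢; exact h1αc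
  set V : E →L[ℂ] E := T.comp U with hV
  set rs := spectralRadius ℂ V with hrs
  have hb0 : ENNReal.ofReal (1-α) ≠ 0 := by
    simp [ENNReal.ofReal_eq_zero]; linarith
  -- lam ≠ 0
  have hlam_ne : lam ≠ 0 := by
    intro h
    rw [h] at hlam
    simp at hlam
  have hL0 : (‖lam‖₊ : ENNReal) ≠ 0 := by
    simp [hlam_ne]
  -- basic equation
  have e1 : lam • f = ((α:ℂ) * πst (T f)) • one + ((1-α:ℝ):ℂ) • U (T f) := by
    rw [← heig, hP]
  set g := T f with hg
  set c := πst g with hc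
  have key : lam • g = ((α:ℂ) * c) • T one + ((1-α:ℝ):ℂ) • V g := by
    have := congrArg T e1
    simpa [map_add, map_smul, hV] using this
  -- c ≠ 0
  have hcne : c ≠ 0 := by
    intro hc0
    rw [hc0] at key
    simp only [mul_zero, zero_smul, zero_add] at key
    by_cases hg0 : g = 0
    · rw [hc0, hg0] at e1
      simp only [mul_zero, zero_smul, zero_add, map_zero, smul_zero] at e1
      exact hf ((smul_eq_zero.mp e1).resolve_left hlam_ne)
    · -- eigenvalue of V
      set μ : ℂ := lam / ((1-α:ℝ):ℂ) with hμ
      have hUg : V g = μ • g := by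
        apply smul_right_injective E h1αc
        show ((1-α:ℝ):ℂ) • (V g) = ((1-α:ℝ):ℂ) • (μ • g)
        rw [← key, smul_smul, hμ]
        congr 1
        push_cast
        field_simp
      have hmem : μ ∈ spectrum ℂ V := by
        rw [spectrum.mem_iff]
        intro hunit
        obtain ⟨u, hu⟩ := hunit
        have hker : (algebraMap ℂ (E →L[ℂ] E) μ - V) g = 0 := by
          simp [Algebra.algebraMap_eq_smul_one, ContinuousLinearMap.sub_apply,
            ContinuousLinearMap.smul_apply, ContinuousLinearMap.one_apply, hUg]
        have hmul : (↑u⁻¹ * (algebraMap ℂ (E →L[ℂ] E) μ - V)) = 1 := by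
          rw [← hu]; exact u.inv_mul
        have h2 : (↑u⁻¹ * (algebraMap ℂ (E →L[ℂ] E) μ - V)) g = g := by
          rw [hmul, ContinuousLinearMap.one_apply]
        rw [ContinuousLinearMap.mul_apply, hker, map_zero] at h2
        exact hg0 h2.symm
      have hle : (‖μ‖₊ : ENNReal) ≤ rs := le_iSup₂ (α := ENNReal) μ hmem
      have hlameq : (‖lam‖₊ : ENNReal) = ENNReal.ofReal (1-α) * (‖μ‖₊ : ENNReal) := by
        have hlm : lam = ((1-α:ℝ):ℂ) * μ := by
          rw [hμ]
          field_simp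
        rw [hlm, nnnorm_mul, ENNReal.coe_mul]
        congr 1
        rw [← enorm_eq_nnnorm, ← ofReal_norm, Complex.norm_real, Real.norm_eq_abs, abs_of_pos h1α]
      rw [hlameq] at hlam
      exact absurd hlam (not_lt.mpr (mul_le_mul_right hle _))
  -- main case
  set z : ℂ := ((1-α:ℝ):ℂ) / lam with hz
  have hzcoe : (‖z‖₊ : ENNReal) = ENNReal.ofReal (1-α) / (‖lam‖₊ : ENNReal) := by
    rw [hz, nnnorm_div, ENNReal.coe_div (by simpa using hlam_ne)]
    congr 1
    rw [← enorm_eq_nnnorm, ← ofReal_norm, Complex.norm_real, Real.norm_eq_abs, abs_of_pos h1α]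
  have hnz : (‖z‖₊ : ENNReal) < rs⁻¹ := by
    rw [hzcoe]
    rw [ENNReal.div_lt_iff (Or.inl hL0) (Or.inl ENNReal.coe_ne_top)]
    have : rs⁻¹ * (‖lam‖₊ : ENNReal) = (‖lam‖₊ : ENNReal) / rs := by
      rw [ENNReal.div_eq_inv_mul]
    rw [this, ENNReal.lt_div_iff_mul_lt (Or.inr ENNReal.ofReal_ne_top) (Or.inr hb0)]
    exact hlam
  have hsum := hasSum_inv_one_sub_smul V hnz
  have hunit : IsUnit (1 - z • V) := spectrum.isUnit_one_sub_smul_of_lt_inv_radius hnz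
  set R := Ring.inverse (1 - z • V) with hR
  have key2 : (1 - z • V) g = (((α:ℂ) * c)/lam) • T one := by
    apply smul_right_injective E hlam_ne
    have hlz : lam * z = ((1-α:ℝ):ℂ) := by rw [hz]; field_simp
    calc lam • ((1 - z • V) g) = lam • g - (lam*z) • V g := by
          simp [ContinuousLinearMap.sub_apply, ContinuousLinearMap.smul_apply,
            ContinuousLinearMap.one_apply, smul_sub, smul_smul]
      _ = ((α:ℂ) * c) • T one := by rw [hlz, key]; abel
      _ = lam • ((((α:ℂ) * c)/lam) • T one) := by
          rw [smul_smul]; congr 1; field_simp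
  have hgR : g = R ((((α:ℂ) * c)/lam) • T one) := by
    have h2 : (R * (1 - z • V)) g = R ((((α:ℂ) * c)/lam) • T one) := by
      rw [ContinuousLinearMap.mul_apply, key2]
    rwa [hR, Ring.inverse_mul_cancel _ hunit, ContinuousLinearMap.one_apply] at h2
  -- apply evaluation at T one and πst to the HasSum
  have hsumA := (ContinuousLinearMap.apply ℂ E (T one)).hasSum hsum
  have hsum3 : HasSum (fun n : ℕ => z ^ n * πst ((V ^ n) (T one))) (πst (R (T one))) := by
    have hsumB := πst.hasSum hsumA
    simp only [ContinuousLinearMap.apply_apply, ContinuousLinearMap.smul_apply,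
      smul_eq_mul, map_smul] at hsumB
    exact hsumB
  set S := πst (R (T one)) with hS
  have htsum : ∑' n : ℕ, z ^ n * πst ((V ^ n) (T one)) = S := hsum3.tsum_eq
  -- compute c
  have hcc : c = (((α:ℂ) * c)/lam) * S := by
    have h3 : πst g = πst (R ((((α:ℂ) * c)/lam) • T one)) := by rw [← hgR]
    rw [map_smul, map_smul, smul_eq_mul, ← hS] at h3
    exact h3
  rw [htsum]
  have h2 : lam * c = ((α:ℂ) * S) * c := by
    calc lam * c = lam * ((((α:ℂ) * c)/lam) * S) := by rw [← hcc]
      _ = ((α:ℂ) * S) * c := by field_simp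
  exact mul_right_cancel₀ hcne h2
end

section
/- (Autoregressive model, drift inequality for perturbed kernel.) Let P be a Markov kernel on ℝ and V : ℝ → [1,∞) such that PV ≤ δV + L·1 for some δ > 0, L > 0. Let ξ : ℝ → [0,∞) be coercive (i.e., [ξ ≤ β] is bounded for every β) and V bounded on bounded sets, and define P_γ f = P(e^{-γξ} f). Then for every γ > 0 and every β > 0: P_γ V ≤ e^{-γβ} δ V + (L + sup_{[ξ≤β]} V) 1. Moreover P_∞ V ≤ (sup_{[ξ=0]} V) 1, where P_∞ f = P(1_{[ξ=0]} f). -/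
open MeasureTheory ProbabilityTheory Filter

/-- autoregressive model, drift inequality for the perturbed kernel:
if `PV ≤ δV + L`, `ξ ≥ 0` is coercive and `V ≥ 1` is bounded on bounded sets, then
for all `γ, β > 0`, `P_γ V ≤ e^{-γβ} δ V + (L + sup_{[ξ≤β]} V) 1`, and
`P_∞ V ≤ (sup_{[ξ=0]} V) 1`. -/
theorem stmt13 (P : Kernel ℝ ℝ) [IsMarkovKernel P]
    (V : ℝ → ℝ) (hVmeas : Measurable V) (hV1 : ∀ x, 1 ≤ V x)
    (hVbdd : ∀ s : Set ℝ, Bornology.IsBounded s → BddAbove (V '' s))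
    (hVint : ∀ x, Integrable V (P x))
    (δ L : ℝ) (hδ : 0 < δ) (hL : 0 < L)
    (hdrift : ∀ x, ∫ y, V y ∂(P x) ≤ δ * V x + L)
    (ξ : ℝ → ℝ) (hξmeas : Measurable ξ) (hξpos : ∀ x, 0 ≤ ξ x)
    (hcoercive : ∀ β : ℝ, Bornology.IsBounded {x | ξ x ≤ β}) :
    (∀ γ β : ℝ, 0 < γ → 0 < β → ∀ x,
      ∫ y, Real.exp (-γ * ξ y) * V y ∂(P x) ≤
        Real.exp (-γ * β) * δ * V x + (L + sSup (V '' {z | ξ z ≤ β}))) ∧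
    (∀ x, ∫ y, Set.indicator {z | ξ z = 0} V y ∂(P x) ≤ sSup (V '' {z | ξ z = 0})) := by
  have hsSup_nonneg : ∀ β : ℝ, 0 ≤ sSup (V '' {z | ξ z ≤ β}) := by
    intro β
    rcases Set.eq_empty_or_nonempty {z | ξ z ≤ β} with h | ⟨z, hz⟩
    · simp [h, Real.sSup_empty]
    · have hb : BddAbove (V '' {z | ξ z ≤ β}) := hVbdd _ (hcoercive β)
      have := le_csSup hb (Set.mem_image_of_mem V hz)
      linarith [hV1 z]
  constructor
  · intro γ β hγ hβ x
    set M := sSup (V '' {z | ξ z ≤ β}) with hM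
    have hb : BddAbove (V '' {z | ξ z ≤ β}) := hVbdd _ (hcoercive β)
    have hpt : ∀ y, Real.exp (-γ * ξ y) * V y ≤ Real.exp (-γ * β) * V y + M := by
      intro y
      by_cases hy : ξ y ≤ β
      · have h1 : Real.exp (-γ * ξ y) * V y ≤ V y := by
          have : Real.exp (-γ * ξ y) ≤ 1 := by
            apply Real.exp_le_one_iff.mpr
            nlinarith [hξpos y]
          nlinarith [hV1 y]
        have h2 : V y ≤ M := le_csSup hb (Set.mem_image_of_mem V hy)
        have h3 : 0 ≤ Real.exp (-γ * β) * V y := mul_nonneg (Real.exp_pos _).le (by linarith [hV1 y])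
        linarith
      · have h1 : Real.exp (-γ * ξ y) ≤ Real.exp (-γ * β) := by
          apply Real.exp_le_exp.mpr
          nlinarith
        have h2 : Real.exp (-γ * ξ y) * V y ≤ Real.exp (-γ * β) * V y := by
          have := hV1 y
          nlinarith
        linarith [hsSup_nonneg β]
    have hint1 : Integrable (fun y => Real.exp (-γ * ξ y) * V y) (P x) := by
      apply (hVint x).mono ((measurable_const.mul hξmeas).exp.mul hVmeas).aestronglyMeasurable
      filter_upwards with y
      have h1 : Real.exp (-γ * ξ y) ≤ 1 := by
        apply Real.exp_le_one_iff.mpr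
        nlinarith [hξpos y]
      have h0 : 0 < Real.exp (-γ * ξ y) := Real.exp_pos _
      have hv := hV1 y
      show ‖Real.exp (-γ * ξ y) * V y‖ ≤ ‖V y‖
      rw [Real.norm_eq_abs, Real.norm_eq_abs, abs_of_nonneg (mul_nonneg (Real.exp_pos _).le (by linarith)),
        abs_of_nonneg (by linarith)]
      nlinarith
    have hint2 : Integrable (fun y => Real.exp (-γ * β) * V y + M) (P x) :=
      (((hVint x).const_mul _).add (integrable_const M))
    calc ∫ y, Real.exp (-γ * ξ y) * V y ∂(P x)
        ≤ ∫ y, (Real.exp (-γ * β) * V y + M) ∂(P x) := integral_mono hint1 hint2 hpt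
      _ = Real.exp (-γ * β) * ∫ y, V y ∂(P x) + M := by
          rw [integral_add ((hVint x).const_mul _) (integrable_const M),
            integral_const_mul, integral_const]
          simp
      _ ≤ Real.exp (-γ * β) * (δ * V x + L) + M := by
          have := hdrift x
          have h0 : (0:ℝ) < Real.exp (-γ * β) := Real.exp_pos _
          nlinarith
      _ ≤ Real.exp (-γ * β) * δ * V x + (L + M) := by
          have h1 : Real.exp (-γ * β) ≤ 1 := by
            apply Real.exp_le_one_iff.mpr
            nlinarith
          have h0 : (0:ℝ) < Real.exp (-γ * β) := Real.exp_pos _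
          nlinarith
  · intro x
    set M := sSup (V '' {z | ξ z = 0}) with hM
    have hsub : {z | ξ z = 0} ⊆ {z | ξ z ≤ 0} := fun z hz => le_of_eq hz
    have hb : BddAbove (V '' {z | ξ z = 0}) :=
      (hVbdd _ (hcoercive 0)).mono (Set.image_mono hsub)
    have hM0 : 0 ≤ M := by
      rcases Set.eq_empty_or_nonempty {z | ξ z = 0} with h | ⟨z, hz⟩
      · simp [hM, h, Real.sSup_empty]
      · have := le_csSup hb (Set.mem_image_of_mem V hz)
        linarith [hV1 z]
    have hpt : ∀ y, Set.indicator {z | ξ z = 0} V y ≤ M := by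
      intro y
      by_cases hy : y ∈ {z | ξ z = 0}
      · rw [Set.indicator_of_mem hy]
        exact le_csSup hb (Set.mem_image_of_mem V hy)
      · rw [Set.indicator_of_notMem hy]; exact hM0
    have hint1 : Integrable (fun y => Set.indicator {z | ξ z = 0} V y) (P x) := by
      have hms : MeasurableSet {z | ξ z = 0} := hξmeas (measurableSet_singleton 0)
      apply (hVint x).mono (hVmeas.indicator hms).aestronglyMeasurable
      filter_upwards with y
      by_cases hy : y ∈ {z | ξ z = 0}
      · rw [Set.indicator_of_mem hy]
      · rw [Set.indicator_of_notMem hy]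
        simp [Real.norm_eq_abs, abs_of_nonneg (le_trans zero_le_one (hV1 y))]
        linarith [hV1 y]
    calc ∫ y, Set.indicator {z | ξ z = 0} V y ∂(P x)
        ≤ ∫ _, M ∂(P x) := integral_mono hint1 (integrable_const M) hpt
      _ = M := by simp
end

section
/- (Autoregressive model, Hölder continuity of the perturbation.) Let P be a Markov kernel on ℝ, V ≥ 1, and 0 ≤ a < a+b ≤ 1. Assume ξ ≤ cV for some c > 0 and that P acts boundedly on the weighted-supremum space C_{V^{a+b}}. Then for all γ, γ' ∈ [0,∞): ‖P_γ - P_{γ'}‖_{C_{V^a} → C_{V^{a+b}}} ≤ (c|γ-γ'|)^b ‖P‖_{C_{V^{a+b}}}, where P_γ f = P(e^{-γξ} f). -/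
open MeasureTheory ProbabilityTheory Filter

lemma exp_holder {b : ℝ} (hb : 0 < b) (hb1 : b ≤ 1) {u v : ℝ} (hu : 0 ≤ u) (hv : 0 ≤ v) :
    |Real.exp (-u) - Real.exp (-v)| ≤ |u - v| ^ b := by
  wlog h : v ≤ u generalizing u v
  · rw [abs_sub_comm, abs_sub_comm u v]; exact this hv hu (le_of_not_ge h)
  have h1 : Real.exp (-u) - Real.exp (-v) ≤ 0 := by
    simp [Real.exp_le_exp.2 (neg_le_neg h)]
  rw [abs_of_nonpos h1, abs_of_nonneg (by linarith)]
  rw [neg_sub]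
  have key : Real.exp (-v) - Real.exp (-u) ≤ min 1 (u - v) := by
    refine le_min ?_ ?_
    · have := Real.exp_pos (-u)
      have := Real.exp_le_one_iff.2 (neg_nonpos.2 hv)
      linarith
    · have h2 : 1 - (u - v) ≤ Real.exp (-(u - v)) := by
        have := Real.add_one_le_exp (-(u - v)); linarith
      have h3 : Real.exp (-v) * Real.exp (-(u-v)) = Real.exp (-u) := by
        rw [← Real.exp_add]; ring_nf
      have h4 : Real.exp (-v) ≤ 1 := Real.exp_le_one_iff.2 (neg_nonpos.2 hv)
      have h5 : Real.exp (-v) * (1 - (u-v)) ≤ Real.exp (-u) := by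
        rw [← h3]; exact mul_le_mul_of_nonneg_left h2 (Real.exp_pos _).le
      nlinarith [Real.exp_pos (-v)]
  refine key.trans ?_
  set d := u - v with hd
  have hd0 : 0 ≤ d := by linarith
  rcases le_or_gt 1 d with h1d | h1d
  · calc min 1 d ≤ 1 := min_le_left _ _
    _ = (1:ℝ) ^ b := (Real.one_rpow b).symm
    _ ≤ d ^ b := Real.rpow_le_rpow zero_le_one h1d hb.le
  · rcases eq_or_lt_of_le hd0 with h0 | h0
    · simp [← h0, Real.zero_rpow hb.ne']
    · calc min 1 d ≤ d := min_le_right _ _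
      _ = d ^ (1:ℝ) := (Real.rpow_one d).symm
      _ ≤ d ^ b := Real.rpow_le_rpow_of_exponent_ge h0 h1d.le hb1

/-- autoregressive model, Hölder continuity of the perturbation:
with `0 ≤ a < a+b ≤ 1`, `ξ ≤ cV` and `P` bounded on `C_{V^{a+b}}` (with bound `CP`,
i.e. `P(V^{a+b}) ≤ CP · V^{a+b}`), for all `γ, γ' ≥ 0` and every `f` with
`‖f‖_{V^a} ≤ 1` one has `|P_γ f - P_{γ'} f| ≤ (c|γ-γ'|)^b · CP · V^{a+b}` pointwise,
i.e. `‖P_γ - P_{γ'}‖_{C_{V^a} → C_{V^{a+b}}} ≤ (c|γ-γ'|)^b ‖P‖_{C_{V^{a+b}}}`. -/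
theorem stmt14 (P : Kernel ℝ ℝ) [IsMarkovKernel P]
    (V : ℝ → ℝ) (hVmeas : Measurable V) (hV1 : ∀ x, 1 ≤ V x)
    (a b : ℝ) (ha : 0 ≤ a) (hb : 0 < b) (hab : a + b ≤ 1)
    (ξ : ℝ → ℝ) (hξmeas : Measurable ξ) (hξpos : ∀ x, 0 ≤ ξ x)
    (c : ℝ) (hc : 0 < c) (hξV : ∀ x, ξ x ≤ c * V x)
    (hVint : ∀ x, Integrable (fun y => V y ^ (a + b)) (P x))
    (CP : ℝ) (hCP : ∀ x, ∫ y, V y ^ (a + b) ∂(P x) ≤ CP * V x ^ (a + b)) :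
    ∀ γ γ' : ℝ, 0 ≤ γ → 0 ≤ γ' → ∀ f : ℝ → ℂ, Measurable f →
      (∀ x, ‖f x‖ ≤ V x ^ a) → ∀ x,
      ‖(∫ y, Real.exp (-γ * ξ y) • f y ∂(P x))
          - (∫ y, Real.exp (-γ' * ξ y) • f y ∂(P x))‖ ≤
        (c * |γ - γ'|) ^ b * CP * V x ^ (a + b) := by
  intro γ γ' hγ hγ' f hfmeas hfb x
  have hb1 : b ≤ 1 := by linarith
  have hVpos : ∀ y, (0:ℝ) < V y := fun y => lt_of_lt_of_le one_pos (hV1 y)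
  -- pointwise bound on difference of integrands
  have hpt : ∀ y, ‖Real.exp (-γ * ξ y) • f y - Real.exp (-γ' * ξ y) • f y‖ ≤
      (c * |γ - γ'|) ^ b * V y ^ (a + b) := by
    intro y
    rw [← sub_smul, norm_smul]
    have h1 : ‖Real.exp (-γ * ξ y) - Real.exp (-γ' * ξ y)‖ ≤ (|γ - γ'| * ξ y) ^ b := by
      have := exp_holder hb hb1 (mul_nonneg hγ (hξpos y)) (mul_nonneg hγ' (hξpos y))
      rw [Real.norm_eq_abs]
      simp only [neg_mul] at this ⊢
      convert this using 2
      rw [← sub_mul, abs_mul, abs_of_nonneg (hξpos y)]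
    have h2 : (|γ - γ'| * ξ y) ^ b ≤ (c * |γ - γ'|) ^ b * V y ^ b := by
      rw [← Real.mul_rpow (by positivity) (hVpos y).le]
      apply Real.rpow_le_rpow (mul_nonneg (abs_nonneg _) (hξpos y)) _ hb.le
      calc |γ - γ'| * ξ y ≤ |γ - γ'| * (c * V y) :=
            mul_le_mul_of_nonneg_left (hξV y) (abs_nonneg _)
        _ = c * |γ - γ'| * V y := by ring
    calc ‖Real.exp (-γ * ξ y) - Real.exp (-γ' * ξ y)‖ * ‖f y‖
        ≤ ((c * |γ - γ'|) ^ b * V y ^ b) * (V y ^ a) := by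
          apply mul_le_mul (h1.trans h2) (hfb y) (norm_nonneg _)
            (mul_nonneg (Real.rpow_nonneg (by positivity) _) (Real.rpow_nonneg (hVpos y).le _))
      _ = (c * |γ - γ'|) ^ b * V y ^ (a + b) := by
          rw [Real.rpow_add (hVpos y)]; ring
  -- integrability
  have hint : ∀ γ₀ : ℝ, 0 ≤ γ₀ → Integrable (fun y => Real.exp (-γ₀ * ξ y) • f y) (P x) := by
    intro γ₀ hγ₀
    have hmeas : AEStronglyMeasurable (fun y => Real.exp (-γ₀ * ξ y) • f y) (P x) :=
      (((hξmeas.const_mul (-γ₀)).exp).aestronglyMeasurable.smul hfmeas.aestronglyMeasurable)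
    refine Integrable.mono (hVint x) hmeas (Filter.Eventually.of_forall fun y => ?_)
    rw [norm_smul, Real.norm_eq_abs, abs_of_pos (Real.exp_pos _), Real.norm_eq_abs,
      abs_of_pos (Real.rpow_pos_of_pos (hVpos y) (a+b))]
    calc Real.exp (-γ₀ * ξ y) * ‖f y‖ ≤ 1 * V y ^ a := by
          apply mul_le_mul _ (hfb y) (norm_nonneg _) zero_le_one
          exact Real.exp_le_one_iff.2 (by nlinarith [hξpos y])
      _ = V y ^ a := one_mul _
      _ ≤ V y ^ (a + b) := Real.rpow_le_rpow_of_exponent_le (hV1 y) (by linarith)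
  rw [← integral_sub (hint γ hγ) (hint γ' hγ')]
  calc ‖∫ y, (Real.exp (-γ * ξ y) • f y - Real.exp (-γ' * ξ y) • f y) ∂(P x)‖
      ≤ ∫ y, ‖Real.exp (-γ * ξ y) • f y - Real.exp (-γ' * ξ y) • f y‖ ∂(P x) :=
        norm_integral_le_integral_norm _
    _ ≤ ∫ y, (c * |γ - γ'|) ^ b * V y ^ (a + b) ∂(P x) := by
        apply integral_mono_of_nonneg (Filter.Eventually.of_forall fun y => norm_nonneg _)
          ((hVint x).const_mul _) (Filter.Eventually.of_forall hpt)
    _ = (c * |γ - γ'|) ^ b * ∫ y, V y ^ (a + b) ∂(P x) := integral_const_mul _ _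
    _ ≤ (c * |γ - γ'|) ^ b * (CP * V x ^ (a + b)) :=
        mul_le_mul_of_nonneg_left (hCP x) (by positivity)
    _ = (c * |γ - γ'|) ^ b * CP * V x ^ (a + b) := by ring
end

section
/- (Counter-example: spectral radius identically 1.) Let (X,d) be a metric space, P a Markov kernel on X such that for some S > 0 the support of P(x,·) is contained in the ball B(x,S) for every x, and ξ : X → [0,∞) with ξ(y) → 0 as d(y,x₀) → ∞ for some fixed x₀ ∈ X, and suppose X is unbounded enough that X \ B(x₀,R) is nonempty for every R. Then for every γ ∈ [0,∞), the operator P_γ f = P(e^{-γξ} f) on the space L^∞ of bounded measurable functions with sup norm satisfies ‖P_γ^n‖ = 1 for all n ≥ 1, hence its spectral radius r(γ) equals 1. -/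
open MeasureTheory ProbabilityTheory Filter

/-- counter-example: spectral radius identically 1: if the Markov kernel
`P` has finite range `S` (the support of `P(x,·)` lies in `B(x,S)`), `ξ(y) → 0` as
`d(y,x₀) → ∞`, and the space is unbounded, then for every `γ ≥ 0` and `n ≥ 1` the
operator norm of `P_γ^n` on bounded measurable functions is `1`; hence the spectral
radius `r(γ) = 1`. -/
theorem stmt17 {X : Type*} [MetricSpace X] [MeasurableSpace X] [BorelSpace X]
    (P : Kernel X X) [IsMarkovKernel P] (S : ℝ) (hS : 0 < S)
    (hsupp : ∀ x, (P x) ((Metric.ball x S)ᶜ) = 0)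
    (x₀ : X) (ξ : X → ℝ) (hξmeas : Measurable ξ) (hξpos : ∀ x, 0 ≤ ξ x)
    (hξ0 : Tendsto ξ (Filter.comap (fun y => dist y x₀) Filter.atTop) (nhds 0))
    (hunbdd : ∀ R : ℝ, ∃ x : X, R < dist x x₀)
    (TK : ℝ → (X → ℝ) → X → ℝ)
    (hTK : ∀ γ f x, TK γ f x = ∫ y, Real.exp (-γ * ξ y) * f y ∂(P x)) :
    ∀ γ : ℝ, 0 ≤ γ → ∀ n : ℕ, 1 ≤ n →
      (⨆ (f : X → ℝ) (_ : Measurable f ∧ ∀ x, |f x| ≤ 1) (x : X),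
        ENNReal.ofReal |((TK γ)^[n] f) x|) = 1 := by
  intro γ hγ n hn
  have hexp_le_one : ∀ y : X, Real.exp (-γ * ξ y) ≤ 1 := by
    intro y
    rw [Real.exp_le_one_iff]
    have := mul_nonneg hγ (hξpos y)
    linarith
  have hmeas_exp : Measurable fun y : X => Real.exp (-γ * ξ y) :=
    ((hξmeas.const_mul (-γ)).exp).comp measurable_id |>.mono le_rfl le_rfl
  -- preservation of "measurable and bounded by 1"
  have key : ∀ f : X → ℝ, Measurable f → (∀ x, |f x| ≤ 1) →
      Measurable (TK γ f) ∧ ∀ x, |TK γ f x| ≤ 1 := by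
    intro f hf hfb
    have hg : Measurable fun y : X => Real.exp (-γ * ξ y) * f y := hmeas_exp.mul hf
    constructor
    · have heq : TK γ f = fun x => ∫ y, Real.exp (-γ * ξ y) * f y ∂(P x) :=
        funext fun x => hTK γ f x
      rw [heq]
      exact (StronglyMeasurable.integral_kernel_prod_right'
        (κ := P) (f := fun p : X × X => Real.exp (-γ * ξ p.2) * f p.2)
        ((hg.comp measurable_snd).stronglyMeasurable)).measurable
    · intro x
      rw [hTK]
      have hb : ∀ᵐ y ∂(P x), ‖Real.exp (-γ * ξ y) * f y‖ ≤ 1 := by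
        refine Eventually.of_forall fun y => ?_
        rw [Real.norm_eq_abs, abs_mul, abs_of_pos (Real.exp_pos _)]
        calc Real.exp (-γ * ξ y) * |f y| ≤ 1 * 1 :=
          mul_le_mul (hexp_le_one y) (hfb y) (abs_nonneg _) zero_le_one
        _ = 1 := one_mul 1
      have := norm_integral_le_of_norm_le_const (μ := P x) hb
      simpa [Real.norm_eq_abs] using this
  have keyn : ∀ m : ℕ, ∀ f : X → ℝ, Measurable f → (∀ x, |f x| ≤ 1) →
      Measurable ((TK γ)^[m] f) ∧ ∀ x, |((TK γ)^[m] f) x| ≤ 1 := by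
    intro m
    induction m with
    | zero => intro f hf hfb; exact ⟨hf, hfb⟩
    | succ m ih =>
      intro f hf hfb
      rw [Function.iterate_succ_apply']
      obtain ⟨h1, h2⟩ := ih f hf hfb
      exact key _ h1 h2
  -- upper bound
  have hupper : (⨆ (f : X → ℝ) (_ : Measurable f ∧ ∀ x, |f x| ≤ 1) (x : X),
      ENNReal.ofReal |((TK γ)^[n] f) x|) ≤ 1 := by
    refine iSup_le fun f => iSup_le fun hf => iSup_le fun x => ?_
    have := (keyn n f hf.1 hf.2).2 x
    exact ENNReal.ofReal_le_one.mpr this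
  -- lower bound
  refine le_antisymm hupper (le_of_forall_lt fun c hc => ?_)
  have hct : c.toReal < 1 := by
    have hcne : c ≠ ⊤ := hc.ne_top
    have := ENNReal.toReal_lt_toReal hcne ENNReal.one_ne_top |>.mpr hc
    simpa using this
  -- find β > 0 with c.toReal < exp(-(γ*β))^n
  have hcont : Tendsto (fun β : ℝ => Real.exp (-(γ * β)) ^ n) (nhdsWithin 0 (Set.Ioi 0))
      (nhds 1) := by
    have hco : Continuous fun β : ℝ => Real.exp (-(γ * β)) ^ n := by continuity
    have := (hco.tendsto 0).mono_left (nhdsWithin_le_nhds (s := Set.Ioi (0:ℝ)))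
    simpa using this
  have hev : ∀ᶠ β in nhdsWithin (0:ℝ) (Set.Ioi 0),
      c.toReal < Real.exp (-(γ * β)) ^ n := hcont.eventually (eventually_gt_nhds hct)
  obtain ⟨β, hβc, hβpos⟩ := (hev.and self_mem_nhdsWithin).exists
  -- find R with ξ ≤ β outside ball R
  have hRex : ∃ R : ℝ, ∀ y, R < dist y x₀ → ξ y ≤ β := by
    have h1 : Set.Iio β ∈ nhds (0:ℝ) := Iio_mem_nhds hβpos
    have h2 := hξ0 h1
    rw [mem_map, mem_comap] at h2
    obtain ⟨t, ht, hts⟩ := h2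
    obtain ⟨R, hR⟩ := mem_atTop_sets.mp ht
    exact ⟨R, fun y hy => le_of_lt (hts (hR _ hy.le))⟩
  obtain ⟨R, hR⟩ := hRex
  -- main induction: far away, the iterates are at least exp(-(γβ))^m
  have main : ∀ m : ℕ, ∀ x : X, R + m * S < dist x x₀ →
      Real.exp (-(γ * β)) ^ m ≤ ((TK γ)^[m] (fun _ => (1:ℝ))) x := by
    intro m
    induction m with
    | zero => intro x _; simp
    | succ m ih =>
      intro x hx
      rw [Function.iterate_succ_apply', hTK]
      obtain ⟨hfm, hfb⟩ := keyn m (fun _ => (1:ℝ)) measurable_const (by intro x; simp)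
      have hg : Measurable fun y : X =>
          Real.exp (-γ * ξ y) * ((TK γ)^[m] (fun _ => (1:ℝ))) y := hmeas_exp.mul hfm
      have hball : ∀ᵐ y ∂(P x), dist y x < S := by
        rw [ae_iff]
        have : {y : X | ¬ dist y x < S} = (Metric.ball x S)ᶜ := by
          ext y; simp [Metric.mem_ball]
        rw [this]; exact hsupp x
      have hae : ∀ᵐ y ∂(P x), Real.exp (-(γ * β)) * Real.exp (-(γ * β)) ^ m ≤
          Real.exp (-γ * ξ y) * ((TK γ)^[m] (fun _ => (1:ℝ))) y := by
        filter_upwards [hball] with y hy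
        have htri : dist x x₀ ≤ dist x y + dist y x₀ := dist_triangle x y x₀
        have hxy : dist x y < S := by rwa [dist_comm]
        have hd : R + m * S < dist y x₀ := by push_cast at hx ⊢; nlinarith
        have hmS : (0:ℝ) ≤ m * S := mul_nonneg (Nat.cast_nonneg m) hS.le
        have hξβ : ξ y ≤ β := hR y (by linarith)
        have h1 : Real.exp (-(γ * β)) ≤ Real.exp (-γ * ξ y) := by
          apply Real.exp_le_exp.mpr; nlinarith
        have h2 : Real.exp (-(γ * β)) ^ m ≤ ((TK γ)^[m] (fun _ => (1:ℝ))) y :=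
          ih y (by linarith)
        exact mul_le_mul h1 h2 (pow_nonneg (Real.exp_pos _).le _) (Real.exp_pos _).le
      have hint : Integrable
          (fun y => Real.exp (-γ * ξ y) * ((TK γ)^[m] (fun _ => (1:ℝ))) y) (P x) := by
        refine ⟨hg.aestronglyMeasurable, ?_⟩
        apply MeasureTheory.HasFiniteIntegral.of_bounded (C := 1)
        refine Eventually.of_forall fun y => ?_
        rw [Real.norm_eq_abs, abs_mul, abs_of_pos (Real.exp_pos _)]
        calc Real.exp (-γ * ξ y) * |((TK γ)^[m] (fun _ => (1:ℝ))) y| ≤ 1 * 1 :=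
          mul_le_mul (hexp_le_one y) (hfb y) (abs_nonneg _) zero_le_one
        _ = 1 := one_mul 1
      have hconst : Real.exp (-(γ * β)) ^ (m + 1) =
          ∫ _ , Real.exp (-(γ * β)) * Real.exp (-(γ * β)) ^ m ∂(P x) := by
        rw [integral_const]
        simp [pow_succ, mul_comm]
      rw [hconst]
      exact integral_mono_ae (integrable_const _) hint hae
  -- pick a far-away point
  obtain ⟨x, hx⟩ := hunbdd (R + n * S)
  have hmain := main n x hx
  have hpos : (0:ℝ) < Real.exp (-(γ * β)) ^ n := pow_pos (Real.exp_pos _) n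
  have habs : Real.exp (-(γ * β)) ^ n ≤ |((TK γ)^[n] (fun _ => (1:ℝ))) x| :=
    hmain.trans (le_abs_self _)
  have hclt : c < ENNReal.ofReal |((TK γ)^[n] (fun _ => (1:ℝ))) x| := by
    rw [ENNReal.lt_ofReal_iff_toReal_lt hc.ne_top]
    exact lt_of_lt_of_le hβc habs
  calc c < ENNReal.ofReal |((TK γ)^[n] (fun _ => (1:ℝ))) x| := hclt
  _ ≤ ⨆ (f : X → ℝ) (_ : Measurable f ∧ ∀ x, |f x| ≤ 1) (x : X),
      ENNReal.ofReal |((TK γ)^[n] f) x| :=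
    le_iSup_of_le (fun _ => (1:ℝ)) (le_iSup_of_le ⟨measurable_const, fun x => by simp⟩
      (le_iSup_of_le x le_rfl))
end

section
/- (Derivative criterion for the leading eigenvalue.) Let B₁ ↪ B₂ be Banach spaces, J = (a,b) ⊂ [0,∞), and (P_γ)_{γ∈J} a family of operators in L(B₁) ∩ L(B₂) such that f ↦ ξf ∈ L(B₁,B₂). Suppose for every γ ∈ J there exist φ_γ ∈ B₁ and π_γ ∈ B₂* with P_γ φ_γ = r(γ) φ_γ and P_γ* π_γ = r(γ) π_γ. Let γ₀ ∈ J be a point where: γ ↦ P_γ is differentiable from J to L(B₁,B₂) with derivative f ↦ P_{γ₀}(-ξf); γ ↦ r(γ) is differentiable; γ ↦ φ_γ is continuous into B₁ and differentiable into B₂. If r(γ₀) ≠ 0 and r'(γ₀) = 0, then π_{γ₀}(ξ φ_{γ₀}) = 0. -/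
open Filter Asymptotics

/-- derivative criterion for the leading eigenvalue: `ι : B₁ ↪ B₂`,
`Mξ : B₁ → B₂` is `f ↦ ξf`, `P¹_γ, P²_γ` are the actions of `P_γ` on `B₁`, `B₂`
(compatible through `ι`), `φ_γ` and `π_γ` are eigenvector and dual eigenvector for the
eigenvalue `r(γ)`. If at `γ₀`: `γ ↦ P_γ ∈ L(B₁,B₂)` has derivative `f ↦ P_{γ₀}(-ξf)`,
`r` is differentiable, `φ` is continuous into `B₁` and differentiable into `B₂`, and
`r(γ₀) ≠ 0`, `r'(γ₀) = 0`, then `π_{γ₀}(ξ φ_{γ₀}) = 0`. -/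
theorem stmt18 {B₁ B₂ : Type*}
    [NormedAddCommGroup B₁] [NormedSpace ℂ B₁] [CompleteSpace B₁]
    [NormedAddCommGroup B₂] [NormedSpace ℂ B₂] [CompleteSpace B₂]
    (ι : B₁ →L[ℂ] B₂) (hι : Function.Injective ι)
    (Mξ : B₁ →L[ℂ] B₂)
    (aJ bJ : ℝ) (haJ : 0 ≤ aJ) (hJ : aJ < bJ)
    (P1 : ℝ → (B₁ →L[ℂ] B₁)) (P2 : ℝ → (B₂ →L[ℂ] B₂))
    (hcompat : ∀ γ ∈ Set.Ioo aJ bJ, ∀ f : B₁, ι (P1 γ f) = P2 γ (ι f))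
    (r : ℝ → ℂ) (φ : ℝ → B₁) (πd : ℝ → (B₂ →L[ℂ] ℂ))
    (heig : ∀ γ ∈ Set.Ioo aJ bJ, P1 γ (φ γ) = r γ • φ γ)
    (heigdual : ∀ γ ∈ Set.Ioo aJ bJ, ∀ g : B₂, πd γ (P2 γ g) = r γ * πd γ g)
    (γ₀ : ℝ) (hγ₀ : γ₀ ∈ Set.Ioo aJ bJ)
    (hPdiff : HasDerivAt (fun γ => (P2 γ).comp ι) (-(P2 γ₀).comp Mξ) γ₀)
    (r' : ℂ) (hrdiff : HasDerivAt r r' γ₀)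
    (hφcont : ContinuousAt φ γ₀)
    (φ' : B₂) (hφdiff : HasDerivAt (fun γ => ι (φ γ)) φ' γ₀)
    (hr0 : r γ₀ ≠ 0) (hr' : r' = 0) :
    πd γ₀ (Mξ (φ γ₀)) = 0 := by
  set A : ℝ → (B₁ →L[ℂ] B₂) := fun γ => (P2 γ).comp ι with hA
  set A' : B₁ →L[ℂ] B₂ := -(P2 γ₀).comp Mξ with hA'
  have hJopen : Set.Ioo aJ bJ ∈ nhds γ₀ := isOpen_Ioo.mem_nhds hγ₀
  -- eventual identity  A γ (φ γ) = r γ • ι (φ γ)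
  have heq : ∀ᶠ γ in nhds γ₀, A γ (φ γ) = r γ • ι (φ γ) := by
    filter_upwards [hJopen] with γ hγ
    have : ι (P1 γ (φ γ)) = P2 γ (ι (φ γ)) := hcompat γ hγ (φ γ)
    rw [heig γ hγ] at this
    simpa [hA, map_smul] using this.symm
  -- first computation of the derivative of F γ := A γ (φ γ)
  have hd1 : HasDerivAt (fun γ => A γ (φ γ)) (r γ₀ • φ') γ₀ := by
    have h : HasDerivAt (fun γ => r γ • ι (φ γ)) (r γ₀ • φ' + r' • ι (φ γ₀)) γ₀ :=
      hrdiff.smul hφdiff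
    rw [hr', zero_smul, add_zero] at h
    exact h.congr_of_eventuallyEq heq
  -- second computation, via the product-rule decomposition
  have hE : (fun γ => A γ - A γ₀ - (γ - γ₀) • A') =o[nhds γ₀] fun γ => γ - γ₀ :=
    hasDerivAt_iff_isLittleO.mp hPdiff
  have h2 : HasDerivAt (fun γ => (A γ - A γ₀) (φ γ)) (A' (φ γ₀)) γ₀ := by
    rw [hasDerivAt_iff_isLittleO]
    have hsplit : ∀ γ, (A γ - A γ₀) (φ γ) - (A γ₀ - A γ₀) (φ γ₀) - (γ - γ₀) • A' (φ γ₀)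
        = (A γ - A γ₀ - (γ - γ₀) • A') (φ γ) + (γ - γ₀) • A' (φ γ - φ γ₀) := by
      intro γ
      simp only [ContinuousLinearMap.sub_apply, ContinuousLinearMap.smul_apply, map_sub,
        sub_self, smul_sub, ContinuousLinearMap.zero_apply, smul_zero, neg_zero,
        zero_sub, sub_zero]
      abel
    simp only [hsplit]
    have hterm1 : (fun γ => (A γ - A γ₀ - (γ - γ₀) • A') (φ γ)) =o[nhds γ₀]
        fun γ => γ - γ₀ := by
      refine IsBigO.trans_isLittleO ?_ hE
      rw [isBigO_iff]
      refine ⟨‖φ γ₀‖ + 1, ?_⟩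
      have hnorm : ∀ᶠ γ in nhds γ₀, ‖φ γ‖ ≤ ‖φ γ₀‖ + 1 := by
        have := hφcont.norm
        exact this.eventually_le_const (by linarith [norm_nonneg (φ γ₀)])
      filter_upwards [hnorm] with γ hγ
      calc ‖(A γ - A γ₀ - (γ - γ₀) • A') (φ γ)‖
          ≤ ‖A γ - A γ₀ - (γ - γ₀) • A'‖ * ‖φ γ‖ :=
            ContinuousLinearMap.le_opNorm _ _
        _ ≤ ‖A γ - A γ₀ - (γ - γ₀) • A'‖ * (‖φ γ₀‖ + 1) := by
            exact mul_le_mul_of_nonneg_left hγ (norm_nonneg _)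
        _ = (‖φ γ₀‖ + 1) * ‖A γ - A γ₀ - (γ - γ₀) • A'‖ := mul_comm _ _
    have hterm2 : (fun γ => (γ - γ₀) • A' (φ γ - φ γ₀)) =o[nhds γ₀]
        fun γ => γ - γ₀ := by
      have htend : Tendsto (fun γ => A' (φ γ - φ γ₀)) (nhds γ₀) (nhds 0) := by
        have h0 : Tendsto (fun γ => φ γ - φ γ₀) (nhds γ₀) (nhds 0) := by
          have := hφcont.tendsto.sub (tendsto_const_nhds (x := φ γ₀))
          simpa using this
        have := (A'.continuous.tendsto 0).comp h0
        simpa [Function.comp_def] using this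
      have ho : (fun γ => A' (φ γ - φ γ₀)) =o[nhds γ₀] (fun _ => (1:ℝ)) :=
        (isLittleO_one_iff ℝ).mpr htend
      have hO : (fun γ => γ - γ₀) =O[nhds γ₀] fun γ => γ - γ₀ := isBigO_refl _ _
      simpa using hO.smul_isLittleO ho
    exact hterm1.add hterm2
  have h1 : HasDerivAt (fun γ => (A γ₀) (φ γ)) ((P2 γ₀) φ') γ₀ := by
    have h := (((P2 γ₀).restrictScalars ℝ).hasFDerivAt (x := ι (φ γ₀))).comp_hasDerivAt γ₀ hφdiff
    simpa [Function.comp_def, hA] using h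
  have hd2 : HasDerivAt (fun γ => A γ (φ γ)) (A' (φ γ₀) + (P2 γ₀) φ') γ₀ := by
    have := h2.add h1
    convert this using 2 with γ
    simp [ContinuousLinearMap.sub_apply]
  -- uniqueness of the derivative
  have hkey : r γ₀ • φ' = A' (φ γ₀) + (P2 γ₀) φ' := hd1.unique hd2
  -- apply the dual eigenvector
  have happ := congrArg (πd γ₀) hkey
  have hdual := heigdual γ₀ hγ₀
  simp only [map_smul, map_add, hA', ContinuousLinearMap.neg_apply,
    ContinuousLinearMap.comp_apply, map_neg, hdual, smul_eq_mul] at happ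
  have : r γ₀ * πd γ₀ (Mξ (φ γ₀)) = 0 := by linear_combination happ
  exact (mul_eq_zero.mp this).resolve_left hr0
end
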